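/- If the generator L of an irreducible Markov chain on finite E satisfies the sector condition ⟨Lf,g⟩_π² ≤ C_0 ⟨(-L)f,f⟩_π ⟨(-L)g,g⟩_π for all f, g, then for every pair of disjoint nonempty subsets A, B: Cap^s(A,B) ≤ Cap(A,B) ≤ C_0 Cap^s(A,B), where Cap^s is the capacity of the symmetrized chain with generator (1/2)(L + L*). -/

import Mathlib

/-!
Write `D_Q(f, g) = ⟨-L_Q f, g⟩_π`. Stationarity of `π` makes the adjoint rates generate `L*`,
so the symmetrized form is `D^s(f, g) = (D(f, g) + D(g, f)) / 2`, and
`D(f, f) = ½ Σ π(x) R(x,y) (f y - f x)² ≥ 0`. Summing by parts, `Cap(A,B) = D(h, g)` for every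
`g` equal to `1` on `A` and `0` on `B`, and likewise `Cap^s(A,B) = D^s(hs, g)`. Hence
`0 ≤ D(h - hs, h - hs) = Cap - Cap^s`, while the sector condition at `(h, hs)` gives
`Cap² = D(h, hs)² ≤ C₀ · Cap · Cap^s`.
-/

open Finset

/-- Generator of a continuous-time Markov chain with jump rates `R`. -/
def mcGen {E : Type*} [Fintype E] (R : E → E → ℝ) (f : E → ℝ) (η : E) : ℝ :=
  ∑ ξ, R η ξ * (f ξ - f η)

/-- Symmetrized rates `R^s(x,y) = (1/2)(R(x,y) + R*(x,y))`, where
`R*(x,y) = π(y)R(y,x)/π(x)` are the adjoint rates. -/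
noncomputable def symRates {E : Type*} (R : E → E → ℝ) (π : E → ℝ) (x y : E) : ℝ :=
  (1 / 2) * (R x y + π y * R y x / π x)

noncomputable def adjRates {E : Type*} (R : E → E → ℝ) (π : E → ℝ) (x y : E) : ℝ :=
  π y * R y x / π x

def IsStationaryDist {E : Type*} [Fintype E] (R : E → E → ℝ) (π : E → ℝ) : Prop :=
  ∀ f : E → ℝ, ∑ x, π x * mcGen R f x = 0

def dirichletForm {E : Type*} [Fintype E] (Q : E → E → ℝ) (π f g : E → ℝ) : ℝ :=
  ∑ x, (-(mcGen Q f x)) * g x * π x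

/-- The capacity of `(A, B)`, computed from an equilibrium potential `u` of `(A, B)`. -/
def capacity {E : Type*} [Fintype E] (Q : E → E → ℝ) (π : E → ℝ) (A : Finset E) (u : E → ℝ) :
    ℝ :=
  ∑ η ∈ A, π η * ∑ ξ, Q η ξ * (1 - u ξ)

section DirichletForm

variable {E : Type*} [Fintype E]

theorem mcGen_sub (Q : E → E → ℝ) (f g : E → ℝ) (x : E) :
    mcGen Q (f - g) x = mcGen Q f x - mcGen Q g x := by
  rw [mcGen, mcGen, mcGen, ← sum_sub_distrib]
  exact sum_congr rfl fun y _ => by simp only [Pi.sub_apply]; ring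

theorem neg_dirichletForm (Q : E → E → ℝ) (π f g : E → ℝ) :
    -dirichletForm Q π f g = ∑ x, mcGen Q f x * g x * π x := by
  rw [dirichletForm, ← sum_neg_distrib]
  exact sum_congr rfl fun x _ => by ring

theorem dirichletForm_eq_sum_sum (Q : E → E → ℝ) (π f g : E → ℝ) :
    dirichletForm Q π f g = ∑ x, ∑ y, π x * Q x y * (f x - f y) * g x := by
  refine sum_congr rfl fun x _ => ?_
  rw [mcGen, neg_mul, neg_mul, sum_mul, sum_mul, ← sum_neg_distrib]
  exact sum_congr rfl fun y _ => by ring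

theorem dirichletForm_sub_sub (Q : E → E → ℝ) (π f g : E → ℝ) :
    dirichletForm Q π (f - g) (f - g) =
      dirichletForm Q π f f - dirichletForm Q π f g - dirichletForm Q π g f +
        dirichletForm Q π g g := by
  simp only [dirichletForm, mcGen_sub, ← sum_sub_distrib, ← sum_add_distrib]
  exact sum_congr rfl fun x _ => by simp only [Pi.sub_apply]; ring

theorem capacity_eq_dirichletForm (Q : E → E → ℝ) (π : E → ℝ) {A B : Finset E} {u g : E → ℝ}
    (hu1 : ∀ x ∈ A, u x = 1) (hu : ∀ x, x ∉ A → x ∉ B → mcGen Q u x = 0)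
    (hg1 : ∀ x ∈ A, g x = 1) (hg0 : ∀ x ∈ B, g x = 0) :
    capacity Q π A u = dirichletForm Q π u g := by
  have hvanish : ∀ x ∈ univ, x ∉ A → (-(mcGen Q u x)) * g x * π x = 0 := by
    intro x _ hxA
    by_cases hxB : x ∈ B
    · rw [hg0 x hxB, mul_zero, zero_mul]
    · rw [hu x hxA hxB, neg_zero, zero_mul, zero_mul]
  rw [dirichletForm, ← sum_subset (subset_univ A) hvanish]
  refine sum_congr rfl fun η hη => ?_
  rw [hg1 η hη, mcGen, ← sum_neg_distrib, sum_mul, sum_mul, mul_sum]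
  exact sum_congr rfl fun ξ _ => by rw [hu1 η hη]; ring

variable {R : E → E → ℝ} {π : E → ℝ}

theorem IsStationaryDist.sum_sum_mul_sub (hR : IsStationaryDist R π) (F : E → ℝ) :
    ∑ x, ∑ y, π x * R x y * (F y - F x) = 0 := by
  simpa only [mcGen, mul_sum, mul_assoc] using hR F

theorem IsStationaryDist.dirichletForm_adjRates (hR : IsStationaryDist R π) (hπ : ∀ x, π x ≠ 0)
    (f g : E → ℝ) : dirichletForm (adjRates R π) π f g = dirichletForm R π g f :=
  calc dirichletForm (adjRates R π) π f g
      = ∑ x, ∑ y, π x * R x y * (f y - f x) * g y := by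
        rw [dirichletForm_eq_sum_sum, sum_comm]
        refine sum_congr rfl fun x _ => sum_congr rfl fun y _ => ?_
        rw [adjRates, mul_div_cancel₀ _ (hπ y)]
    _ = ∑ x, ∑ y, π x * R x y * ((f * g) y - (f * g) x) + dirichletForm R π g f := by
        rw [dirichletForm_eq_sum_sum, ← sum_add_distrib]
        refine sum_congr rfl fun x _ => ?_
        rw [← sum_add_distrib]
        exact sum_congr rfl fun y _ => by simp only [Pi.mul_apply]; ring
    _ = dirichletForm R π g f := by rw [hR.sum_sum_mul_sub, zero_add]

theorem mcGen_symRates (R : E → E → ℝ) (π f : E → ℝ) (x : E) :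
    mcGen (symRates R π) f x = (mcGen R f x + mcGen (adjRates R π) f x) / 2 := by
  rw [mcGen, mcGen, mcGen, ← sum_add_distrib, sum_div]
  exact sum_congr rfl fun y _ => by rw [symRates, adjRates]; ring

theorem IsStationaryDist.dirichletForm_symRates (hR : IsStationaryDist R π) (hπ : ∀ x, π x ≠ 0)
    (f g : E → ℝ) :
    dirichletForm (symRates R π) π f g = (dirichletForm R π f g + dirichletForm R π g f) / 2 := by
  rw [← hR.dirichletForm_adjRates hπ f g, dirichletForm, dirichletForm, dirichletForm,
    ← sum_add_distrib, sum_div]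
  exact sum_congr rfl fun x _ => by rw [mcGen_symRates]; ring

theorem IsStationaryDist.dirichletForm_self (hR : IsStationaryDist R π) (f : E → ℝ) :
    dirichletForm R π f f = (∑ x, ∑ y, π x * R x y * (f y - f x) ^ 2) / 2 := by
  have hsplit : ∑ x, ∑ y, π x * R x y * (f y - f x) ^ 2 =
      2 * ∑ x, ∑ y, π x * R x y * (f x - f y) * f x +
        ∑ x, ∑ y, π x * R x y * ((f ^ 2) y - (f ^ 2) x) := by
    rw [mul_sum, ← sum_add_distrib]
    refine sum_congr rfl fun x _ => ?_
    rw [mul_sum, ← sum_add_distrib]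
    exact sum_congr rfl fun y _ => by simp only [Pi.pow_apply]; ring
  rw [hsplit, hR.sum_sum_mul_sub, dirichletForm_eq_sum_sum]
  ring

theorem IsStationaryDist.dirichletForm_self_nonneg (hR : IsStationaryDist R π)
    (hR₀ : ∀ x y, x ≠ y → 0 ≤ R x y) (hπ : ∀ x, 0 ≤ π x) (f : E → ℝ) :
    0 ≤ dirichletForm R π f f := by
  rw [hR.dirichletForm_self]
  refine div_nonneg (sum_nonneg fun x _ => sum_nonneg fun y _ => ?_) zero_le_two
  rcases eq_or_ne x y with rfl | hxy
  · simp
  · exact mul_nonneg (mul_nonneg (hπ x) (hR₀ x y hxy)) (sq_nonneg _)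

end DirichletForm

theorem le_mul_of_sq_le_mul_mul {a b c : ℝ} (hb : 0 ≤ b) (hba : b ≤ a)
    (h : a ^ 2 ≤ c * a * b) : a ≤ c * b := by
  rcases (hb.trans hba).eq_or_lt with rfl | ha
  · rw [le_antisymm hba hb, mul_zero]
  · exact le_of_mul_le_mul_left (by nlinarith) ha

theorem capacity_sector_comparison_general {E : Type*} [Fintype E]
    (R : E → E → ℝ) (π : E → ℝ) (C₀ : ℝ) (A B : Finset E)
    (hR : ∀ x y : E, x ≠ y → 0 ≤ R x y) (hπpos : ∀ x, 0 < π x)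
    (hstat : ∀ f : E → ℝ, ∑ x, π x * mcGen R f x = 0)
    (hsector : ∀ f g : E → ℝ,
      (∑ x, mcGen R f x * g x * π x) ^ 2 ≤
        C₀ * (∑ x, (-(mcGen R f x)) * f x * π x) * (∑ x, (-(mcGen R g x)) * g x * π x))
    (h hs : E → ℝ)
    (hh1 : ∀ x ∈ A, h x = 1) (hh0 : ∀ x ∈ B, h x = 0)
    (hharm : ∀ x, x ∉ A → x ∉ B → mcGen R h x = 0)
    (hs1 : ∀ x ∈ A, hs x = 1) (hs0 : ∀ x ∈ B, hs x = 0)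
    (hsharm : ∀ x, x ∉ A → x ∉ B → mcGen (symRates R π) hs x = 0) :
    (∑ η ∈ A, π η * ∑ ξ, symRates R π η ξ * (1 - hs ξ))
        ≤ ∑ η ∈ A, π η * ∑ ξ, R η ξ * (1 - h ξ) ∧
    (∑ η ∈ A, π η * ∑ ξ, R η ξ * (1 - h ξ))
        ≤ C₀ * ∑ η ∈ A, π η * ∑ ξ, symRates R π η ξ * (1 - hs ξ) := by
  have hπR : IsStationaryDist R π := hstat
  have hπ : ∀ x, π x ≠ 0 := fun x => (hπpos x).ne'
  change capacity (symRates R π) π A hs ≤ capacity R π A h ∧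
    capacity R π A h ≤ C₀ * capacity (symRates R π) π A hs
  have cap_h_h := capacity_eq_dirichletForm R π hh1 hharm hh1 hh0
  have cap_h_hs := capacity_eq_dirichletForm R π hh1 hharm hs1 hs0
  have caps_hs_hs : capacity (symRates R π) π A hs = dirichletForm R π hs hs := by
    rw [capacity_eq_dirichletForm _ π hs1 hsharm hs1 hs0, hπR.dirichletForm_symRates hπ]
    ring
  have caps_hs_h : capacity (symRates R π) π A hs =
      (dirichletForm R π hs h + dirichletForm R π h hs) / 2 := by
    rw [capacity_eq_dirichletForm _ π hs1 hsharm hh1 hh0, hπR.dirichletForm_symRates hπ]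
  have hnonneg := hπR.dirichletForm_self_nonneg hR (fun x => (hπpos x).le)
  have hlower : capacity (symRates R π) π A hs ≤ capacity R π A h := by
    have := hnonneg (h - hs)
    rw [dirichletForm_sub_sub] at this
    linarith
  refine ⟨hlower, le_mul_of_sq_le_mul_mul (caps_hs_hs ▸ hnonneg hs) hlower ?_⟩
  have hsec : (-dirichletForm R π h hs) ^ 2 ≤
      C₀ * dirichletForm R π h h * dirichletForm R π hs hs := by
    rw [neg_dirichletForm]
    exact hsector h hs
  rwa [neg_sq, ← cap_h_hs, ← cap_h_h, ← caps_hs_hs] at hsec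

/-- If the generator satisfies a sector condition with constant `C₀`, then for
disjoint nonempty `A`, `B`:
`Cap^s(A,B) ≤ Cap(A,B) ≤ C₀ · Cap^s(A,B)`, where `Cap` is expressed through the
equilibrium potential `h` of the chain and `Cap^s` through the equilibrium
potential `hs` of the symmetrized chain (`Cap(A,B) = Σ_{η∈A} π(η) Σ_ξ R(η,ξ)(1-h(ξ))`
`= Σ_{η∈A} π(η)λ(η)P_η[H_B < H_A⁺]`, and similarly for `Cap^s`). -/
theorem capacity_sector_comparison {E : Type*} [Fintype E] [DecidableEq E]
    (R : E → E → ℝ) (π : E → ℝ) (C₀ : ℝ) (A B : Finset E)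
    (hAne : A.Nonempty) (hBne : B.Nonempty) (hAB : Disjoint A B)
    (hR : ∀ x y : E, x ≠ y → 0 ≤ R x y) (hπpos : ∀ x, 0 < π x)
    (hstat : ∀ f : E → ℝ, ∑ x, π x * mcGen R f x = 0)
    (hirr : ∀ x y : E, Relation.ReflTransGen (fun a b => a ≠ b ∧ 0 < R a b) x y)
    (hsector : ∀ f g : E → ℝ,
      (∑ x, mcGen R f x * g x * π x) ^ 2 ≤
        C₀ * (∑ x, (-(mcGen R f x)) * f x * π x) * (∑ x, (-(mcGen R g x)) * g x * π x))
    (h hs : E → ℝ)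
    (hh1 : ∀ x ∈ A, h x = 1) (hh0 : ∀ x ∈ B, h x = 0)
    (hharm : ∀ x, x ∉ A → x ∉ B → mcGen R h x = 0)
    (hs1 : ∀ x ∈ A, hs x = 1) (hs0 : ∀ x ∈ B, hs x = 0)
    (hsharm : ∀ x, x ∉ A → x ∉ B → mcGen (symRates R π) hs x = 0) :
    (∑ η ∈ A, π η * ∑ ξ, symRates R π η ξ * (1 - hs ξ))
        ≤ ∑ η ∈ A, π η * ∑ ξ, R η ξ * (1 - h ξ) ∧
    (∑ η ∈ A, π η * ∑ ξ, R η ξ * (1 - h ξ))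
        ≤ C₀ * ∑ η ∈ A, π η * ∑ ξ, symRates R π η ξ * (1 - hs ξ) :=
  capacity_sector_comparison_general R π C₀ A B hR hπpos hstat hsector h hs hh1 hh0 hharm hs1 hs0
    hsharm
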